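/- Let τ ∈ {0,1}^ℕ be such that S²τ ≠ 1^∞ (i.e. the shifted-twice type sequence is not constantly 1). Then the unique S-invariant probability measure ν_τ on Y_τ gives positive measure to each single-letter cylinder: ν_τ([A]) > 0, ν_τ([B]) > 0, ν_τ([C]) > 0 and ν_τ([D]) > 0. -/

import Mathlib

open MeasureTheory Filter Topology
open scoped ENNReal

attribute [local instance] Classical.propDecidable

noncomputable section

/-- The shift map on bi-infinite sequences: `(S x) n = x (n+1)`. -/
def shift {α : Type*} (x : ℤ → α) : ℤ → α := fun n => x (n + 1)

/-- Shift by an arbitrary integer amount `m`. -/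
def shiftZ {α : Type*} (m : ℤ) (x : ℤ → α) : ℤ → α := fun n => x (n + m)

/-- A run structure on a bi-infinite sequence `x`: `t k` is the starting index of the
`k`-th maximal mono-symbol block of `x`, indexed so that block `0` contains position `0`. -/
structure RunStructure (x : ℤ → ℕ) where
  t : ℤ → ℤ
  mono : StrictMono t
  start_nonpos : t 0 ≤ 0
  start_pos : 0 < t 1
  const : ∀ k i : ℤ, t k ≤ i → i < t (k + 1) → x i = x (t k)
  alt : ∀ k : ℤ, x (t (k + 1)) ≠ x (t k)

/-- `d` is the run-length derivative of `x`: `d k` is the length of the `k`-th run. -/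
def IsDelta (x d : ℤ → ℕ) : Prop :=
  ∃ r : RunStructure x, ∀ k : ℤ, (d k : ℤ) = r.t (k + 1) - r.t k

/-- The run-length derivative operator `Δ` (junk value when no derivative exists). -/
def delta (x : ℤ → ℕ) : ℤ → ℕ :=
  if h : ∃ d, IsDelta x d then h.choose else fun _ => 0

/-- A bi-infinite sequence is smooth over `{1,3}` if all its iterated derivatives exist
and take values in `{1,3}`. -/
def SmoothSeq (x : ℤ → ℕ) : Prop :=
  ∀ k : ℕ, ∀ n : ℤ, delta^[k] x n = 1 ∨ delta^[k] x n = 3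

/-- The set `X` of bi-infinite smooth sequences over `{1,3}`. -/
def SmoothX : Set (ℤ → ℕ) := {x | SmoothSeq x}

/-- The recoding alphabet: `A = 1`, `B = 3`, `C = 111`, `D = 333`. -/
inductive ABCD : Type
  | A | B | C | D
deriving DecidableEq

instance : TopologicalSpace ABCD := ⊥
instance : DiscreteTopology ABCD := ⟨rfl⟩
instance : MeasurableSpace ABCD := ⊤

open ABCD

/-- The symbol (1 or 3) of the run encoded by a letter. -/
def sval : ABCD → ℕ
  | A => 1
  | B => 3
  | C => 1
  | D => 3

/-- The length (1 or 3) of the run encoded by a letter; this is also the value of `Δx`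
at the corresponding position. -/
def lval : ABCD → ℕ
  | A => 1
  | B => 1
  | C => 3
  | D => 3

/-- `y` is the recoding of `x`: the letter `y k` encodes the `k`-th run of `x`
(its symbol and its length). -/
def IsRecoding (x : ℤ → ℕ) (y : ℤ → ABCD) : Prop :=
  ∃ r : RunStructure x, ∀ k : ℤ,
    x (r.t k) = sval (y k) ∧ r.t (k + 1) - r.t k = (lval (y k) : ℤ)

/-- The recoding map `rec` (junk value when no recoding exists). -/
def recode (x : ℤ → ℕ) : ℤ → ABCD :=
  if h : ∃ y, IsRecoding x y then h.choose else fun _ => A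

/-- The set `Y = rec(X)` of recodings of smooth sequences. -/
def SmoothY : Set (ℤ → ABCD) := recode '' SmoothX

/-- The derivative operator induced on recodings: since `(Δx) i = lval (rec x i)`,
we have `Δ(rec x) = rec (Δ x) = recode (lval ∘ rec x)`. -/
def deltaY (y : ℤ → ABCD) : ℤ → ABCD := recode fun i => (lval (y i) : ℕ)

/-- `y` is well-aligned: the elementary block of `y` containing coordinate `0` starts
at position `0` (elementary blocks of `y` are exactly the runs of `Δx`, and
`(Δx) i = lval (y i)`). -/
def WellAligned (y : ℤ → ABCD) : Prop := lval (y (-1)) ≠ lval (y 0)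

/-- `B_Y^L`: the set of `y ∈ Y` such that `y, Δy, ..., Δ^{L-1} y` are all well-aligned. -/
def BY (L : ℕ) : Set (ℤ → ABCD) :=
  {y | y ∈ SmoothY ∧ ∀ l < L, WellAligned (deltaY^[l] y)}

/-- `Σ_y^L(n) = #{k ∈ [1,n] : S^k y ∈ B_Y^L}`. -/
def SigY (L : ℕ) (y : ℤ → ABCD) (n : ℕ) : ℕ :=
  ((Finset.Icc 1 n).filter fun k => shift^[k] y ∈ BY L).card

/-- `y` contains an elementary block in `{ABA, DCD}` (for `y ∈ Y`, any such factor is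
automatically an elementary block). -/
def HasType0 (y : ℤ → ABCD) : Prop :=
  ∃ i : ℤ, (y i = A ∧ y (i + 1) = B ∧ y (i + 2) = A) ∨
           (y i = D ∧ y (i + 1) = C ∧ y (i + 2) = D)

/-- `y` contains an elementary block in `{BAB, CDC}`. -/
def HasType1 (y : ℤ → ABCD) : Prop :=
  ∃ i : ℤ, (y i = B ∧ y (i + 1) = A ∧ y (i + 2) = B) ∨
           (y i = C ∧ y (i + 1) = D ∧ y (i + 2) = C)

/-- The type of a recoded sequence: `false` = type 0, `true` = type 1. -/
def typeOf (y : ℤ → ABCD) : Bool := decide (HasType1 y)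

/-- The sequence of types of the successive derivatives of a smooth sequence `x`. -/
def TypesX (x : ℤ → ℕ) : ℕ → Bool := fun n => typeOf (recode (delta^[n] x))

/-- The sequence of types of the successive derivatives of a recoded sequence `y`. -/
def TypesY (y : ℤ → ABCD) : ℕ → Bool := fun n => typeOf (deltaY^[n] y)

/-- `X_τ`: smooth bi-infinite sequences whose type sequence is exactly `τ`. -/
def Xset (τ : ℕ → Bool) : Set (ℤ → ℕ) := {x ∈ SmoothX | TypesX x = τ}

/-- `Y_τ = rec(X_τ)`. -/
def Yset (τ : ℕ → Bool) : Set (ℤ → ABCD) := recode '' Xset τ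

/-- A sequence over `{A,B,C,D}` is alternating: no two consecutive symbols in `{A,C}`
and no two consecutive symbols in `{B,D}`. -/
def Alternating (y : ℤ → ABCD) : Prop := ∀ n : ℤ, sval (y n) ≠ sval (y (n + 1))

/-- The substitutions `φ₀` and `φ₁` on letters. -/
def phiW : Bool → ABCD → List ABCD
  | false, A => [A]
  | false, B => [D]
  | false, C => [A, B, A]
  | false, D => [D, C, D]
  | true, A => [B]
  | true, B => [C]
  | true, C => [B, A, B]
  | true, D => [C, D, C]

/-- `z` is the image of the bi-infinite sequence `y` under the substitution `φ_t`, with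
the convention that the image of the letter at position `0` starts at position `0`. -/
def IsSubst (t : Bool) (y z : ℤ → ABCD) : Prop :=
  ∃ u : ℤ → ℤ, u 0 = 0 ∧
    (∀ k : ℤ, u (k + 1) = u k + (phiW t (y k)).length) ∧
    (∀ k : ℤ, ∀ j : Fin (phiW t (y k)).length, z (u k + (j : ℕ)) = (phiW t (y k)).get j)

/-- The substitution `φ_t` on bi-infinite sequences. -/
def substF (t : Bool) (y : ℤ → ABCD) : ℤ → ABCD :=
  if h : ∃ z, IsSubst t y z then h.choose else y

/-- The composition `φ_{τ₀} ∘ φ_{τ₁} ∘ ⋯ ∘ φ_{τ_{L-1}}`. -/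
def substComp (τ : ℕ → Bool) : ℕ → (ℤ → ABCD) → (ℤ → ABCD)
  | 0 => id
  | L + 1 => substF (τ 0) ∘ substComp (fun n => τ (n + 1)) L

/-- The homographies `h₀` and `h₁`. -/
def hmap : Bool → ℝ × ℝ → ℝ × ℝ
  | false, p => ((1 - p.1) / (3 - 2 * (p.1 + p.2)), (1 / 2 - p.1) / (3 - 2 * (p.1 + p.2)))
  | true, p => ((1 / 2 - p.1) / (3 - 2 * (p.1 + p.2)), (1 - p.1) / (3 - 2 * (p.1 + p.2)))

/-- The square `K = [0,1/2] × [0,1/2]`. -/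
def Ksq : Set (ℝ × ℝ) := Set.Icc (0 : ℝ) (1 / 2) ×ˢ Set.Icc (0 : ℝ) (1 / 2)

/-- The domain `E = {(a,b) ∈ K : a + b ≤ 3/4}`. -/
def Eset : Set (ℝ × ℝ) := {p ∈ Ksq | p.1 + p.2 ≤ 3 / 4}

/-- The composition `h_{t₀} ∘ h_{t₁} ∘ ⋯ ∘ h_{t_L}`. -/
def hComp (t : ℕ → Bool) : ℕ → (ℝ × ℝ → ℝ × ℝ)
  | 0 => hmap (t 0)
  | L + 1 => hComp t L ∘ hmap (t (L + 1))

/-- The point `(a(t), b(t))`, unique point of `⋂_L (h_{t₀} ∘ ⋯ ∘ h_{t_L})(E)`. -/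
def abPoint (t : ℕ → Bool) : ℝ × ℝ :=
  if h : ∃ p : ℝ × ℝ, (⋂ L : ℕ, hComp t L '' Eset) = {p} then h.choose else 0

/-- The number of occurrences of the letter `s` among positions `1, ..., m` of `z`. -/
def letterCount (s : ABCD) (z : ℤ → ABCD) (m : ℕ) : ℕ :=
  ((Finset.Icc 1 m).filter fun k => z (k : ℤ) = s).card

/-- `w` occurs as a factor of `y` at position `i`. -/
def IsFactorAt (w : List ABCD) (y : ℤ → ABCD) (i : ℤ) : Prop :=
  ∀ j : Fin w.length, y (i + (j : ℕ)) = w.get j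

/-- The cylinder set `[w]` in `{1,3}^ℤ`. -/
def cylX (w : List ℕ) : Set (ℤ → ℕ) :=
  {x | ∀ j : Fin w.length, x ((j : ℕ) : ℤ) = w.get j}

/-- The cylinder set `[w]` in `{A,B,C,D}^ℤ`. -/
def cylY (w : List ABCD) : Set (ℤ → ABCD) :=
  {y | ∀ j : Fin w.length, y ((j : ℕ) : ℤ) = w.get j}

/-- The number of occurrences of the finite word `w` in the prefix `x₀ ⋯ x_{n-1}`. -/
def occCount (x : ℤ → ℕ) (w : List ℕ) (n : ℕ) : ℕ :=
  ((Finset.range n).filter fun i =>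
    i + w.length ≤ n ∧ ∀ j : Fin w.length, x (((i + (j : ℕ) : ℕ)) : ℤ) = w.get j).card

/-- A subshift `Z` is minimal if it contains no nonempty proper closed shift-invariant
subset. -/
def ShiftMinimal {α : Type*} [TopologicalSpace α] (Z : Set (ℤ → α)) : Prop :=
  ∀ W : Set (ℤ → α), W ⊆ Z → W.Nonempty → IsClosed W → shift '' W = W → W = Z

/-!
Shift invariance spreads a null cylinder `[s]` over every coordinate, so `ν`-almost every
`y ∈ Y_τ` avoids the letter `s` altogether. For `y = rec x` with `x` smooth this is impossible
when some type `τ (n + 2)` is `0`. Runs of a fixed symbol all have the same length once a letter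
is missing, and alternation of symbols then forbids `33` (or `11`) in `Δx`; two derivatives
later `D` has disappeared, and it never comes back. A sequence without `D` whose type is `0`
contains neither `A` (it would sit in a block `BAB`) nor `D`, so it alternates `B` and `C`;
then `Δx` alternates `1` and `3`, every run of `Δx` is a single letter, and `Δ²x ≡ 1` has no
derivative.
-/

theorem StrictMono.sub_le_sub_int {f : ℤ → ℤ} (hf : StrictMono f) {a b : ℤ}
    (hab : a ≤ b) : b - a ≤ f b - f a := by
  induction b, hab using Int.leInduction with
  | base => simp
  | succ n _ ih => have := hf (lt_add_one n); omega

theorem StrictMono.apply_add_one_le_of_lt {g : ℤ → ℤ} (hg : StrictMono g) {b c : ℤ}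
    (hc : c ∈ Set.range g) (h : g b < c) : g (b + 1) ≤ c := by
  obtain ⟨j, rfl⟩ := hc
  exact hg.monotone (hg.lt_iff_lt.1 h)

theorem StrictMono.le_apply_sub_one_of_lt {g : ℤ → ℤ} (hg : StrictMono g) {b c : ℤ}
    (hc : c ∈ Set.range g) (h : c < g b) : c ≤ g (b - 1) := by
  obtain ⟨j, rfl⟩ := hc
  exact hg.monotone (Int.le_sub_one_of_lt (hg.lt_iff_lt.1 h))

theorem StrictMono.eq_of_range_eq {f g : ℤ → ℤ} (hf : StrictMono f) (hg : StrictMono g)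
    (hfg : Set.range f = Set.range g) (hf0 : f 0 ≤ 0) (hf1 : 0 < f 1) (hg0 : g 0 ≤ 0)
    (hg1 : 0 < g 1) : f = g := by
  have hf_mem : ∀ k, f k ∈ Set.range g := fun k => hfg ▸ ⟨k, rfl⟩
  have hg_mem : ∀ k, g k ∈ Set.range f := fun k => hfg.symm ▸ ⟨k, rfl⟩
  funext k
  induction k using Int.induction_on with
  | zero =>
    exact le_antisymm (by simpa using hg.le_apply_sub_one_of_lt (b := 1) (hf_mem 0) (by omega))
      (by simpa using hf.le_apply_sub_one_of_lt (b := 1) (hg_mem 0) (by omega))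
  | succ k ih =>
    exact le_antisymm (hf.apply_add_one_le_of_lt (hg_mem _) (ih ▸ hg (lt_add_one _)))
      (hg.apply_add_one_le_of_lt (hf_mem _) (ih ▸ hf (lt_add_one _)))
  | pred k ih =>
    exact le_antisymm (hg.le_apply_sub_one_of_lt (hf_mem _) (ih ▸ hf (sub_one_lt _)))
      (hf.le_apply_sub_one_of_lt (hg_mem _) (ih ▸ hg (sub_one_lt _)))

namespace RunStructure

variable {x : ℤ → ℕ}

theorem exists_t_le_lt (r : RunStructure x) (i : ℤ) : ∃ k, r.t k ≤ i ∧ i < r.t (k + 1) := by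
  have hbdd : ∀ k, r.t k ≤ i → k ≤ max 0 (i - r.t 0) := by
    intro k hk
    rcases le_or_gt k 0 with h | h
    · exact h.trans (le_max_left _ _)
    · have := r.mono.sub_le_sub_int h.le
      exact le_max_of_le_right (by omega)
  have hne : r.t (min 0 (i - r.t 0)) ≤ i := by
    have := r.mono.sub_le_sub_int (min_le_left 0 (i - r.t 0))
    have := min_le_right 0 (i - r.t 0)
    omega
  obtain ⟨k, hk, hmax⟩ := Int.exists_greatest_of_bdd ⟨_, hbdd⟩ ⟨_, hne⟩
  exact ⟨k, hk, lt_of_not_ge fun h => by have := hmax _ h; omega⟩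

theorem mem_range_t_iff (r : RunStructure x) (i : ℤ) :
    i ∈ Set.range r.t ↔ x (i - 1) ≠ x i := by
  constructor
  · rintro ⟨k, rfl⟩
    have hlt : r.t (k - 1) < r.t k := r.mono (sub_one_lt k)
    have hconst := r.const (k - 1) (r.t k - 1) (by omega) (by rw [sub_add_cancel]; omega)
    have halt := r.alt (k - 1)
    rw [sub_add_cancel] at halt
    rw [hconst]
    exact halt.symm
  · intro hne
    obtain ⟨k, hk, hk'⟩ := r.exists_t_le_lt i
    refine ⟨k, le_antisymm hk (not_lt.1 fun hlt => hne ?_)⟩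
    rw [r.const k (i - 1) (by omega) (by omega), r.const k i hk hk']

theorem t_eq (r r' : RunStructure x) : r.t = r'.t :=
  r.mono.eq_of_range_eq r'.mono
    (Set.ext fun i => (r.mem_range_t_iff i).trans (r'.mem_range_t_iff i).symm)
    r.start_nonpos r.start_pos r'.start_nonpos r'.start_pos

end RunStructure

theorem IsDelta.eq {x d d' : ℤ → ℕ} (h : IsDelta x d) (h' : IsDelta x d') : d = d' := by
  obtain ⟨r, hr⟩ := h
  obtain ⟨r', hr'⟩ := h'
  funext k
  have hk := hr k
  rw [r.t_eq r'] at hk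
  exact_mod_cast hk.trans (hr' k).symm

theorem IsRecoding.isDelta {x : ℤ → ℕ} {y : ℤ → ABCD} (h : IsRecoding x y) :
    IsDelta x fun k => lval (y k) :=
  let ⟨r, hr⟩ := h
  ⟨r, fun k => (hr k).2.symm⟩

namespace ABCD

theorem lval_eq_one_or_eq_three (a : ABCD) : lval a = 1 ∨ lval a = 3 := by
  cases a <;> simp [lval]

theorem lval_eq_one_of_ne {s a b : ABCD} (hs : lval s = 3) (hab : sval a ≠ sval b)
    (ha : a ≠ s) (hb : b ≠ s) : lval a = 1 ∨ lval b = 1 := by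
  cases s <;> cases a <;> cases b <;> simp_all [sval, lval]

theorem lval_eq_three_of_ne {s a b : ABCD} (hs : lval s = 1) (hab : sval a ≠ sval b)
    (ha : a ≠ s) (hb : b ≠ s) : lval a = 3 ∨ lval b = 3 := by
  cases s <;> cases a <;> cases b <;> simp_all [sval, lval]

theorem eq_B_of_sval_ne_A {a : ABCD} (ha : sval a ≠ sval A) (hD : a ≠ D) : a = B := by
  cases a <;> simp_all [sval]

theorem lval_ne_of_sval_ne {a b : ABCD} (hab : sval a ≠ sval b) (ha : a = B ∨ a = C)
    (hb : b = B ∨ b = C) : lval a ≠ lval b := by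
  rcases ha with rfl | rfl <;> rcases hb with rfl | rfl <;> simp_all [sval, lval]

end ABCD

namespace SmoothSeq

variable {x : ℤ → ℕ}

theorem iterate_delta (hx : SmoothSeq x) (n : ℕ) : SmoothSeq (delta^[n] x) := fun k m => by
  rw [← Function.iterate_add_apply]
  exact hx (k + n) m

theorem isDelta (hx : SmoothSeq x) : IsDelta x (delta x) := by
  by_cases hex : ∃ d, IsDelta x d
  · rw [delta, dif_pos hex]
    exact hex.choose_spec
  · simpa [delta, hex] using hx 1 0

theorem isRecoding (hx : SmoothSeq x) : IsRecoding x (recode x) := by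
  have hex : ∃ y, IsRecoding x y := by
    obtain ⟨r, hr⟩ := hx.isDelta
    refine ⟨fun k => if x (r.t k) = 1 then (if delta x k = 1 then A else C)
      else (if delta x k = 1 then B else D), r, fun k => ?_⟩
    have hxk : x (r.t k) = 1 ∨ x (r.t k) = 3 := hx 0 (r.t k)
    have hdk : delta x k = 1 ∨ delta x k = 3 := hx 1 k
    have hrk := hr k
    rcases hxk with h1 | h1 <;> rcases hdk with h2 | h2 <;>
      simp only [h1, h2] <;> simp [sval, lval] <;> omega
  rw [recode, dif_pos hex]
  exact hex.choose_spec

theorem delta_eq (hx : SmoothSeq x) : delta x = fun k => lval (recode x k) :=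
  hx.isDelta.eq hx.isRecoding.isDelta

theorem sval_recode_add_one_ne (hx : SmoothSeq x) (k : ℤ) :
    sval (recode x (k + 1)) ≠ sval (recode x k) := by
  obtain ⟨r, h⟩ := hx.isRecoding
  rw [← (h k).1, ← (h (k + 1)).1]
  exact r.alt k

theorem exists_apply_eq_apply_add_one_of_lval (hx : SmoothSeq x) {k : ℤ}
    (hk : lval (recode x k) = 3) :
    ∃ j, x j = sval (recode x k) ∧ x (j + 1) = sval (recode x k) := by
  obtain ⟨r, hr⟩ := hx.isRecoding
  have hlen := (hr k).2
  rw [hk] at hlen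
  refine ⟨r.t k, (hr k).1, ?_⟩
  rw [r.const k (r.t k + 1) (by omega) (by omega)]
  exact (hr k).1

theorem recode_ne_of_forall (hx : SmoothSeq x) {s : ABCD} (hs : lval s = 3)
    (h : ∀ j, x j ≠ sval s ∨ x (j + 1) ≠ sval s) (k : ℤ) : recode x k ≠ s := by
  intro hk
  obtain ⟨j, h1, h2⟩ := hx.exists_apply_eq_apply_add_one_of_lval (hk ▸ hs)
  rw [hk] at h1 h2
  rcases h j with h' | h' <;> contradiction

theorem recode_delta_ne_D (hx : SmoothSeq x) {s : ABCD} (hs : lval s = 3)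
    (h : ∀ k, recode x k ≠ s) : ∀ k, recode (delta x) k ≠ D := by
  refine (hx.iterate_delta 1).recode_ne_of_forall rfl fun j => ?_
  rw [Function.iterate_one, hx.delta_eq]
  rcases ABCD.lval_eq_one_of_ne hs (hx.sval_recode_add_one_ne j).symm (h j) (h (j + 1))
    with h1 | h1 <;> simp [h1, sval]

theorem recode_delta_ne_C (hx : SmoothSeq x) {s : ABCD} (hs : lval s = 1)
    (h : ∀ k, recode x k ≠ s) : ∀ k, recode (delta x) k ≠ C := by
  refine (hx.iterate_delta 1).recode_ne_of_forall rfl fun j => ?_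
  rw [Function.iterate_one, hx.delta_eq]
  rcases ABCD.lval_eq_three_of_ne hs (hx.sval_recode_add_one_ne j).symm (h j) (h (j + 1))
    with h1 | h1 <;> simp [h1, sval]

theorem recode_iterate_delta_ne_D (hx : SmoothSeq x) {s : ABCD} (h : ∀ k, recode x k ≠ s)
    (n : ℕ) (hn : 2 ≤ n) : ∀ k, recode (delta^[n] x) k ≠ D := by
  induction n, hn using Nat.le_induction with
  | base =>
    obtain ⟨s', hs', h'⟩ : ∃ s', lval s' = 3 ∧ ∀ k, recode (delta x) k ≠ s' := by
      rcases s.lval_eq_one_or_eq_three with hs | hs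
      · exact ⟨C, rfl, hx.recode_delta_ne_C hs h⟩
      · exact ⟨D, rfl, hx.recode_delta_ne_D hs h⟩
    exact (hx.iterate_delta 1).recode_delta_ne_D hs' h'
  | succ n _ ih =>
    rw [Function.iterate_succ_apply']
    exact (hx.iterate_delta n).recode_delta_ne_D rfl ih

theorem exists_apply_eq_apply_add_one (hx : SmoothSeq x) : ∃ k, x k = x (k + 1) := by
  by_contra! h
  have hne : ∀ c j, x j ≠ c ∨ x (j + 1) ≠ c := fun c j => by have := h j; omega
  have hone : ∀ k, delta x k = 1 := by
    intro k
    have hC := hx.recode_ne_of_forall (s := C) rfl (hne _) k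
    have hD := hx.recode_ne_of_forall (s := D) rfl (hne _) k
    simp only [hx.delta_eq]
    revert hC hD
    cases recode x k <;> simp [lval]
  obtain ⟨r, -⟩ := (hx.iterate_delta 1).isDelta
  exact r.alt 0 (by simp only [Function.iterate_one, hone])

theorem hasType1_of_forall_ne_D (hx : SmoothSeq x) (hD : ∀ k, recode x k ≠ D) :
    HasType1 (recode x) := by
  by_contra hT
  have hA : ∀ k, recode x k ≠ A := by
    intro k hk
    have hprev := hx.sval_recode_add_one_ne (k - 1)
    rw [sub_add_cancel, hk] at hprev
    have hnext := hx.sval_recode_add_one_ne k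
    rw [hk] at hnext
    refine hT ⟨k - 1, Or.inl ⟨ABCD.eq_B_of_sval_ne_A hprev.symm (hD _), ?_, ?_⟩⟩
    · rwa [sub_add_cancel]
    · rw [show k - 1 + 2 = k + 1 by ring]
      exact ABCD.eq_B_of_sval_ne_A hnext (hD _)
  have hBC : ∀ k, recode x k = B ∨ recode x k = C := by
    intro k
    have hkA := hA k
    have hkD := hD k
    revert hkA hkD
    cases recode x k <;> simp
  obtain ⟨k, hk⟩ := (hx.iterate_delta 1).exists_apply_eq_apply_add_one
  rw [Function.iterate_one, hx.delta_eq] at hk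
  exact ABCD.lval_ne_of_sval_ne (hx.sval_recode_add_one_ne k) (hBC _) (hBC _) hk.symm

theorem typeOf_recode_iterate_delta (hx : SmoothSeq x) {s : ABCD} (h : ∀ k, recode x k ≠ s)
    (n : ℕ) (hn : 2 ≤ n) : typeOf (recode (delta^[n] x)) = true :=
  decide_eq_true <|
    (hx.iterate_delta n).hasType1_of_forall_ne_D (hx.recode_iterate_delta_ne_D h n hn)

end SmoothSeq

section ShiftInvariant

variable {α : Type*} [MeasurableSpace α] {ν : Measure (ℤ → α)}

theorem measure_preimage_eval_eq_of_shift (hν : MeasurePreserving shift ν ν) {s : Set α}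
    (hs : MeasurableSet s) (n : ℤ) :
    ν ((fun y => y n) ⁻¹' s) = ν ((fun y => y 0) ⁻¹' s) := by
  have hstep : ∀ m : ℤ, ν ((fun y => y (m + 1)) ⁻¹' s) = ν ((fun y => y m) ⁻¹' s) :=
    fun m => hν.measure_preimage (measurable_pi_apply m hs).nullMeasurableSet
  induction n using Int.induction_on with
  | zero => rfl
  | succ n ih => exact (hstep n).trans ih
  | pred n ih => exact (hstep _).symm.trans (by rw [sub_add_cancel]; exact ih)

theorem exists_mem_forall_apply_notMem_of_shift (hν : MeasurePreserving shift ν ν)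
    {Z : Set (ℤ → α)} (hZ : ν Z ≠ 0) {s : Set α} (hs : MeasurableSet s)
    (h0 : ν ((fun y => y 0) ⁻¹' s) = 0) : ∃ y ∈ Z, ∀ n, y n ∉ s := by
  have hnull : ν (⋃ n, (fun y => y n) ⁻¹' s) = 0 :=
    measure_iUnion_null fun n => (measure_preimage_eval_eq_of_shift hν hs n).trans h0
  obtain ⟨y, hyZ, hy⟩ := nonempty_of_measure_ne_zero (by rwa [measure_sdiff_null hnull])
  exact ⟨y, hyZ, fun n hn => hy (Set.mem_iUnion.2 ⟨n, hn⟩)⟩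

end ShiftInvariant

theorem cylY_singleton (a : ABCD) : cylY [a] = (fun y => y 0) ⁻¹' {a} := by
  ext y
  simp [cylY]

theorem stmt19_general (τ : ℕ → Bool) (hτ : (fun n => τ (n + 2)) ≠ fun _ => true)
    (ν : Measure (ℤ → ABCD)) (hsupp : ν (Yset τ) = 1)
    (hinv : MeasurePreserving shift ν ν) :
    0 < ν (cylY [A]) ∧ 0 < ν (cylY [B]) ∧ 0 < ν (cylY [C]) ∧ 0 < ν (cylY [D]) := by
  have key : ∀ s, 0 < ν (cylY [s]) := by
    refine fun s => pos_iff_ne_zero.2 fun h0 => ?_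
    obtain ⟨_, ⟨x, ⟨hx, hxτ⟩, rfl⟩, hs⟩ := exists_mem_forall_apply_notMem_of_shift hinv
      (Z := Yset τ) (by simp [hsupp]) MeasurableSpace.measurableSet_top (cylY_singleton s ▸ h0)
    refine hτ (funext fun n => ?_)
    rw [← hxτ]
    exact hx.typeOf_recode_iterate_delta hs (n + 2) (by omega)
  exact ⟨key A, key B, key C, key D⟩

/-- Positive measure of single-letter cylinders.
If `S² τ ≠ 1^∞`, then the unique `S`-invariant probability measure `ν_τ` on `Y_τ` gives
positive measure to each of the cylinders `[A]`, `[B]`, `[C]`, `[D]`. -/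
theorem stmt19 (τ : ℕ → Bool) (hτ : (fun n => τ (n + 2)) ≠ fun _ => true)
    (ν : Measure (ℤ → ABCD)) (hν : IsProbabilityMeasure ν) (hsupp : ν (Yset τ) = 1)
    (hinv : MeasurePreserving shift ν ν) :
    0 < ν (cylY [A]) ∧ 0 < ν (cylY [B]) ∧ 0 < ν (cylY [C]) ∧ 0 < ν (cylY [D]) :=
  stmt19_general τ hτ ν hsupp hinv
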